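/- Let f and g be probability densities on ℝ that are strictly positive on a common support (i.e. {f > 0} = {g > 0} up to Lebesgue-null sets), and let ψ_f(x;f,g) = ½(1 − √(g(x)/f(x)) − H²(f,g)) on supp(f) (and 0 elsewhere) and ψ_g(x;f,g) = ½(1 − √(f(x)/g(x)) − H²(f,g)) on supp(g) (and 0 elsewhere). Then ∫ψ_f(x;f,g)² f(x) dx = (2H²(f,g) − H⁴(f,g))/4 and ∫ψ_g(x;f,g)² g(x) dx = (2H²(f,g) − H⁴(f,g))/4; consequently, for any λ ∈ (0,1), λ⁻¹∫ψ_f² f + (1−λ)⁻¹∫ψ_g² g = (2H²(f,g) − H⁴(f,g))/(4λ(1−λ)). -/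
import Mathlib

open MeasureTheory

/-- A probability density on ℝ (with respect to Lebesgue measure). -/
def IsDensity (f : ℝ → ℝ) : Prop :=
  Measurable f ∧ (∀ x, 0 ≤ f x) ∧ ∫ x, f x = 1

/-- The squared Hellinger distance `H²(f,g) = ½∫(√f − √g)²`. -/
noncomputable def hell2 (f g : ℝ → ℝ) : ℝ :=
  (1 / 2) * ∫ x, (Real.sqrt (f x) - Real.sqrt (g x)) ^ 2

/-- The influence function `ψ_f(x;f,g) = ½(1 − √(g(x)/f(x)) − H²(f,g))·1_{supp(f)}(x)`. -/
noncomputable def psiF (f g : ℝ → ℝ) : ℝ → ℝ :=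
  Set.indicator {x | 0 < f x} (fun x => (1 / 2) * (1 - Real.sqrt (g x / f x) - hell2 f g))

/-- The influence function `ψ_g(x;f,g) = ½(1 − √(f(x)/g(x)) − H²(f,g))·1_{supp(g)}(x)`. -/
noncomputable def psiG (f g : ℝ → ℝ) : ℝ → ℝ :=
  Set.indicator {x | 0 < g x} (fun x => (1 / 2) * (1 - Real.sqrt (f x / g x) - hell2 f g))

lemma hell2_comm (f g : ℝ → ℝ) : hell2 g f = hell2 f g := by
  unfold hell2
  congr 1
  apply integral_congr_ae (Filter.Eventually.of_forall fun x => by ring)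

lemma psiG_eq (f g : ℝ → ℝ) : psiG f g = psiF g f := by
  unfold psiG psiF
  rw [hell2_comm]

lemma integrable_of_density {f : ℝ → ℝ} (hf : IsDensity f) : Integrable f := by
  by_contra h
  have := hf.2.2
  rw [integral_undef h] at this
  norm_num at this

lemma integrable_sqrt_mul {f g : ℝ → ℝ} (hf : IsDensity f) (hg : IsDensity g) :
    Integrable (fun x => Real.sqrt (f x) * Real.sqrt (g x)) := by
  have hb : Integrable (fun x => (f x + g x) / 2) :=
    ((integrable_of_density hf).add (integrable_of_density hg)).div_const 2
  refine Integrable.mono' hb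
    ((Real.continuous_sqrt.measurable.comp hf.1).mul
      (Real.continuous_sqrt.measurable.comp hg.1)).aestronglyMeasurable
    (Filter.Eventually.of_forall fun x => ?_)
  have h1 := Real.sq_sqrt (hf.2.1 x)
  have h2 := Real.sq_sqrt (hg.2.1 x)
  have h3 := Real.sqrt_nonneg (f x)
  have h4 := Real.sqrt_nonneg (g x)
  rw [Real.norm_eq_abs, abs_of_nonneg (mul_nonneg h3 h4)]
  nlinarith [sq_nonneg (Real.sqrt (f x) - Real.sqrt (g x))]

lemma sqrt_mul_integral {f g : ℝ → ℝ} (hf : IsDensity f) (hg : IsDensity g) :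
    ∫ x, Real.sqrt (f x) * Real.sqrt (g x) = 1 - hell2 f g := by
  have hfg : Integrable (fun x => f x + g x) :=
    (integrable_of_density hf).add (integrable_of_density hg)
  have hI : ∫ x, (Real.sqrt (f x) - Real.sqrt (g x)) ^ 2
      = ∫ x, (f x + g x - 2 * (Real.sqrt (f x) * Real.sqrt (g x))) := by
    apply integral_congr_ae (Filter.Eventually.of_forall fun x => ?_)
    have h1 := Real.sq_sqrt (hf.2.1 x)
    have h2 := Real.sq_sqrt (hg.2.1 x)
    nlinarith
  have h2 : ∫ x, (f x + g x - 2 * (Real.sqrt (f x) * Real.sqrt (g x)))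
      = 1 + 1 - 2 * ∫ x, Real.sqrt (f x) * Real.sqrt (g x) := by
    rw [integral_sub hfg ((integrable_sqrt_mul hf hg).const_mul 2),
      integral_add (integrable_of_density hf) (integrable_of_density hg),
      integral_const_mul, hf.2.2, hg.2.2]
  unfold hell2
  rw [hI, h2]
  ring

lemma key (f g : ℝ → ℝ) (hf : IsDensity f) (hg : IsDensity g)
    (hsupp : {x | 0 < f x} =ᵐ[(volume : Measure ℝ)] {x | 0 < g x}) :
    (∫ x, psiF f g x ^ 2 * f x) = (2 * hell2 f g - hell2 f g ^ 2) / 4 := by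
  set h := hell2 f g with hh
  have hpt : ∀ x, psiF f g x ^ 2 * f x =
      ((1 - h) ^ 2 * f x - 2 * (1 - h) * (Real.sqrt (f x) * Real.sqrt (g x))) / 4
        + Set.indicator {x | 0 < f x} (fun x => g x / 4) x := by
    intro x
    by_cases hx : x ∈ {x | 0 < f x}
    · rw [psiF, Set.indicator_of_mem hx, Set.indicator_of_mem hx]
      have hx' : 0 < f x := hx
      have hsd : Real.sqrt (g x / f x) = Real.sqrt (g x) / Real.sqrt (f x) :=
        Real.sqrt_div (hg.2.1 x) _
      have h1 : Real.sqrt (f x) ^ 2 = f x := Real.sq_sqrt (hf.2.1 x)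
      have h2 : Real.sqrt (g x) ^ 2 = g x := Real.sq_sqrt (hg.2.1 x)
      have hs : Real.sqrt (f x) ≠ 0 := ne_of_gt (Real.sqrt_pos.mpr hx')
      rw [hsd]
      set s := Real.sqrt (f x) with hsdef
      set t := Real.sqrt (g x) with htdef
      rw [← h1, ← h2]
      field_simp
      ring
    · have hfx : f x = 0 := le_antisymm (not_lt.mp hx) (hf.2.1 x)
      rw [psiF, Set.indicator_of_notMem hx, Set.indicator_of_notMem hx, hfx]
      simp
  have hind : Set.indicator {x | 0 < f x} (fun x => g x / 4)
      =ᵐ[(volume : Measure ℝ)] (fun x => g x / 4) := by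
    refine (indicator_ae_eq_of_ae_eq_set hsupp).trans (Filter.Eventually.of_forall fun x => ?_)
    by_cases hx : x ∈ {x | 0 < g x}
    · rw [Set.indicator_of_mem hx]
    · have hgx : g x = 0 := le_antisymm (not_lt.mp hx) (hg.2.1 x)
      rw [Set.indicator_of_notMem hx]
      simp [hgx]
  have hiInd : Integrable (Set.indicator {x | 0 < f x} (fun x => g x / 4)) :=
    ((integrable_of_density hg).div_const 4).congr hind.symm
  have hA : Integrable (fun x => (1 - h) ^ 2 * f x) := (integrable_of_density hf).const_mul _
  have hB : Integrable (fun x => 2 * (1 - h) * (Real.sqrt (f x) * Real.sqrt (g x))) :=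
    (integrable_sqrt_mul hf hg).const_mul _
  have hi1 : Integrable (fun x =>
      ((1 - h) ^ 2 * f x - 2 * (1 - h) * (Real.sqrt (f x) * Real.sqrt (g x))) / 4) :=
    (hA.sub hB).div_const 4
  have e1 : (∫ x, ((1 - h) ^ 2 * f x - 2 * (1 - h) * (Real.sqrt (f x) * Real.sqrt (g x))) / 4)
      = ((1 - h) ^ 2 * 1 - 2 * (1 - h) * (1 - h)) / 4 := by
    rw [integral_div, integral_sub hA hB, integral_const_mul, integral_const_mul, hf.2.2,
      sqrt_mul_integral hf hg]
  have e2 : (∫ x, Set.indicator {x | 0 < f x} (fun x => g x / 4) x) = 1 / 4 := by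
    rw [integral_congr_ae hind, integral_div, hg.2.2]
  calc (∫ x, psiF f g x ^ 2 * f x)
      = ∫ x, (((1 - h) ^ 2 * f x - 2 * (1 - h) * (Real.sqrt (f x) * Real.sqrt (g x))) / 4
        + Set.indicator {x | 0 < f x} (fun x => g x / 4) x) :=
        integral_congr_ae (Filter.Eventually.of_forall hpt)
    _ = (∫ x, ((1 - h) ^ 2 * f x - 2 * (1 - h) * (Real.sqrt (f x) * Real.sqrt (g x))) / 4)
        + ∫ x, Set.indicator {x | 0 < f x} (fun x => g x / 4) x := integral_add hi1 hiInd
    _ = (2 * h - h ^ 2) / 4 := by rw [e1, e2]; ring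

theorem stmt_14 (f g : ℝ → ℝ) (hf : IsDensity f) (hg : IsDensity g)
    (hsupp : {x | 0 < f x} =ᵐ[(volume : Measure ℝ)] {x | 0 < g x}) :
    (∫ x, psiF f g x ^ 2 * f x) = (2 * hell2 f g - hell2 f g ^ 2) / 4 ∧
    (∫ x, psiG f g x ^ 2 * g x) = (2 * hell2 f g - hell2 f g ^ 2) / 4 ∧
    ∀ lam : ℝ, lam ∈ Set.Ioo (0 : ℝ) 1 →
      lam⁻¹ * (∫ x, psiF f g x ^ 2 * f x) + (1 - lam)⁻¹ * (∫ x, psiG f g x ^ 2 * g x) =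
        (2 * hell2 f g - hell2 f g ^ 2) / (4 * lam * (1 - lam)) := by
  have h1 := key f g hf hg hsupp
  have h2 : (∫ x, psiG f g x ^ 2 * g x) = (2 * hell2 f g - hell2 f g ^ 2) / 4 := by
    rw [psiG_eq, ← hell2_comm f g]
    exact key g f hg hf hsupp.symm
  refine ⟨h1, h2, fun lam hlam => ?_⟩
  rw [h1, h2]
  have h0 : lam ≠ 0 := ne_of_gt hlam.1
  have h1' : (1 : ℝ) - lam ≠ 0 := ne_of_gt (by linarith [hlam.2])
  field_simp
  ring
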